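/- arXiv:2112.11618 — 5 statements merged into one kernel-verified Lean document; each statement's English description precedes it below -/
import Mathlib

section
/- Let {M_a} be an informationally complete POVM with Gram matrix T, and let τ₁, τ₂ be two generalized inverses of T (T = Tτ₁T and T = Tτ₂T). Then for any two Hermitian operators ρ and σ, Tr(ρσ) = Σ_{a,b} P_ρ(a) [τ₁ T τ₂ᵗ]_{ab} P_σ(b), where P_ρ(a) = Tr(ρ M_a) and P_σ(b) = Tr(σ M_b). -/
open Matrix
open scoped ComplexOrder

/-- For an IC-POVM with Gram matrix T and two generalized inverses
τ₁, τ₂, the overlap of two Hermitian operators is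
Tr(ρσ) = Σ_{a,b} P_ρ(a) [τ₁ T τ₂ᵗ]_{ab} P_σ(b). -/
theorem stmt3 {d : ℕ} {ι : Type*} [Fintype ι] [DecidableEq ι]
    (M : ι → Matrix (Fin d) (Fin d) ℂ)
    (hpos : ∀ a, (M a).PosSemidef)
    (hsum : ∑ a, M a = 1)
    (hspan : ∀ A : Matrix (Fin d) (Fin d) ℂ, A.IsHermitian →
      A ∈ Submodule.span ℝ (Set.range M))
    (T : Matrix ι ι ℝ)
    (hT : ∀ a b, T a b = ((M a * M b).trace).re)
    (τ₁ τ₂ : Matrix ι ι ℝ)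
    (hτ₁ : T * τ₁ * T = T) (hτ₂ : T * τ₂ * T = T)
    (ρ σ : Matrix (Fin d) (Fin d) ℂ) (hρ : ρ.IsHermitian) (hσ : σ.IsHermitian) :
    ((ρ * σ).trace).re =
      ∑ a, ∑ b, ((ρ * M a).trace).re * (τ₁ * T * τ₂ᵀ) a b * ((σ * M b).trace).re := by
  -- T is symmetric
  have hTsymm : Tᵀ = T := by
    ext a b
    simp only [transpose_apply, hT]
    rw [Matrix.trace_mul_comm]
  -- generalized inverse property for τ₂ᵀ
  have h2 : T * τ₂ᵀ * T = T := by
    have h := congrArg Matrix.transpose hτ₂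
    simpa [Matrix.transpose_mul, hTsymm, Matrix.mul_assoc] using h
  have hmat : T * (τ₁ * T * τ₂ᵀ * T) = T := by
    rw [← Matrix.mul_assoc, ← Matrix.mul_assoc, ← Matrix.mul_assoc, hτ₁, h2]
  -- expansions of ρ and σ in terms of the POVM
  obtain ⟨x, hx⟩ := (Submodule.mem_span_range_iff_exists_fun ℝ).mp (hspan ρ hρ)
  obtain ⟨y, hy⟩ := (Submodule.mem_span_range_iff_exists_fun ℝ).mp (hspan σ hσ)
  -- probabilities in terms of coefficients
  have hP : ∀ (A : Matrix (Fin d) (Fin d) ℂ) (c : ι → ℝ), (∑ i, c i • M i) = A →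
      ∀ a, ((A * M a).trace).re = (T *ᵥ c) a := by
    intro A c hc a
    subst hc
    rw [Finset.sum_mul, Matrix.trace_sum, Complex.re_sum]
    simp only [Matrix.smul_mul, Matrix.trace_smul, Complex.smul_re, mulVec,
      dotProduct, hT, smul_eq_mul]
    refine Finset.sum_congr rfl fun b _ => ?_
    rw [Matrix.trace_mul_comm, mul_comm]
  -- the overlap in terms of coefficients
  have hover : ((ρ * σ).trace).re = x ⬝ᵥ (T *ᵥ y) := by
    rw [← hx, ← hy]
    rw [Finset.sum_mul, Matrix.trace_sum, Complex.re_sum]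
    simp only [Finset.mul_sum, Matrix.smul_mul, Matrix.mul_smul, Matrix.trace_sum,
      Matrix.trace_smul, Complex.re_sum, Complex.smul_re, smul_eq_mul,
      dotProduct, mulVec, hT, Finset.mul_sum]
    refine Finset.sum_congr rfl fun a _ => Finset.sum_congr rfl fun b _ => ?_
    ring
  have h1 : ∀ a, ((ρ * M a).trace).re = (T *ᵥ x) a := hP ρ x hx
  have h2' : ∀ b, ((σ * M b).trace).re = (T *ᵥ y) b := hP σ y hy
  simp only [h1, h2', hover]
  have hsum' : ∀ (u w : ι → ℝ) (B : Matrix ι ι ℝ),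
      ∑ a, ∑ b, u a * B a b * w b = u ⬝ᵥ (B *ᵥ w) := by
    intro u w B
    simp [dotProduct, mulVec, Finset.mul_sum, mul_assoc]
  rw [hsum', Matrix.mulVec_mulVec]
  have hTx : T *ᵥ x = x ᵥ* T := by rw [← hTsymm, Matrix.mulVec_transpose, hTsymm]
  rw [hTx, ← Matrix.dotProduct_mulVec, Matrix.mulVec_mulVec, hmat]
end

section
/- For the Pauli-6 POVM with Gram matrix T, the generalized inverse 3τ̃ (with τ̃ block diagonal with blocks [[2,−1],[−1,2]]) satisfies 3τ̃·T = T⁺·T, where T⁺ is the Moore–Penrose pseudoinverse of T; consequently the estimator tensors (3τ̃)T(3τ̃)ᵗ and T⁺T(T⁺)ᵗ coincide. -/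
open Matrix Complex
open scoped ComplexOrder

noncomputable section

/-- The six unit eigenvectors of the Pauli matrices Z, X, Y (in pairs). -/
def pauliEigVec : Fin 6 → Fin 2 → ℂ
  | 0 => ![1, 0]
  | 1 => ![0, 1]
  | 2 => ![((Real.sqrt 2 : ℝ) : ℂ)⁻¹, ((Real.sqrt 2 : ℝ) : ℂ)⁻¹]
  | 3 => ![((Real.sqrt 2 : ℝ) : ℂ)⁻¹, -((Real.sqrt 2 : ℝ) : ℂ)⁻¹]
  | 4 => ![((Real.sqrt 2 : ℝ) : ℂ)⁻¹, Complex.I * ((Real.sqrt 2 : ℝ) : ℂ)⁻¹]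
  | 5 => ![((Real.sqrt 2 : ℝ) : ℂ)⁻¹, -Complex.I * ((Real.sqrt 2 : ℝ) : ℂ)⁻¹]

/-- The Pauli-6 POVM: M_a = (1/3)|a⟩⟨a|. -/
def pauli6 (a : Fin 6) : Matrix (Fin 2) (Fin 2) ℂ :=
  (3 : ℂ)⁻¹ • Matrix.vecMulVec (pauliEigVec a) (star (pauliEigVec a))

end

/-- The block-diagonal matrix τ̃ with three 2×2 blocks [[2,−1],[−1,2]]. -/
def tauTilde : Matrix (Fin 6) (Fin 6) ℝ :=
  !![2, -1, 0, 0, 0, 0;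
     -1, 2, 0, 0, 0, 0;
     0, 0, 2, -1, 0, 0;
     0, 0, -1, 2, 0, 0;
     0, 0, 0, 0, 2, -1;
     0, 0, 0, 0, -1, 2]

/-!
A matrix `X` with `T X T = T` and `X T` symmetric (Penrose conditions (1) and (4)) makes `X T` the
orthogonal projection onto the row space of `T`, so `X T` does not depend on the choice of such `X`;
in particular `X T = T⁺ T`. For the Pauli-6 POVM the three eigenbases are mutually unbiased, so
`Tr(M_a M_b) = |⟨a|b⟩|² / 9` equals `1/9`, `0` or `1/18`, and a direct computation shows that
`X = 3τ̃` satisfies both conditions. When `T` is symmetric, `X T = Y T` already forces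
`X T Xᵀ = Y (X T)ᵀ = Y (Y T)ᵀ = Y T Yᵀ`.
-/

namespace Matrix

variable {m n R : Type*} [Fintype n] [CommSemiring R]

theorem mul_eq_mul_of_mul_mul_eq_of_isSymm [Fintype m] {T : Matrix m n R} {P Q : Matrix n m R}
    (hP : T * P * T = T) (hPT : (P * T).IsSymm) (hQ : T * Q * T = T) (hQT : (Q * T).IsSymm) :
    Q * T = P * T := by
  have hPQ : P * T = P * T * (Q * T) := by
    conv_lhs => rw [← hQ]
    simp only [Matrix.mul_assoc]
  have hQP : Q * T = Q * T * (P * T) := by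
    conv_lhs => rw [← hP]
    simp only [Matrix.mul_assoc]
  calc Q * T = Q * T * (P * T) := hQP
    _ = (P * T * (Q * T))ᵀ := by rw [transpose_mul, hPT.eq, hQT.eq]
    _ = (P * T)ᵀ := by rw [← hPQ]
    _ = P * T := hPT.eq

theorem mul_mul_transpose_eq_of_mul_eq {T : Matrix n n R} {P Q : Matrix m n R} (hT : T.IsSymm)
    (h : Q * T = P * T) : Q * T * Qᵀ = P * T * Pᵀ :=
  calc Q * T * Qᵀ = P * T * Qᵀ := by rw [h]
    _ = P * (Q * T)ᵀ := by rw [transpose_mul, hT.eq, Matrix.mul_assoc]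
    _ = P * (P * T)ᵀ := by rw [h]
    _ = P * T * Pᵀ := by rw [transpose_mul, hT.eq, Matrix.mul_assoc]

theorem trace_vecMulVec_star_mul_vecMulVec_star (u v : n → ℂ) :
    (vecMulVec u (star u) * vecMulVec v (star v)).trace = normSq (star u ⬝ᵥ v) := by
  rw [vecMulVec_mul_vecMulVec, trace_vecMulVec, dotProduct_smul, dotProduct_comm u,
    star_dotProduct v, smul_eq_mul, Complex.star_def, Complex.mul_conj]

end Matrix

theorem normSq_star_pauliEigVec_dotProduct (a b : Fin 6) :
    normSq (star (pauliEigVec a) ⬝ᵥ pauliEigVec b) =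
      if a = b then 1 else if (a : ℕ) / 2 = (b : ℕ) / 2 then 0 else 1 / 2 := by
  have hsqrt : ((Real.sqrt 2 : ℝ) : ℂ)⁻¹ ^ 2 = 2⁻¹ := by
    rw [inv_pow, ← Complex.ofReal_pow, Real.sq_sqrt zero_le_two, Complex.ofReal_ofNat]
  fin_cases a <;> fin_cases b <;> simp [pauliEigVec, dotProduct, Fin.sum_univ_two] <;> ring_nf <;>
    simp [hsqrt, normSq_apply] <;> norm_num

noncomputable def pauli6Gram : Matrix (Fin 6) (Fin 6) ℝ :=
  !![1/9, 0, 1/18, 1/18, 1/18, 1/18;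
     0, 1/9, 1/18, 1/18, 1/18, 1/18;
     1/18, 1/18, 1/9, 0, 1/18, 1/18;
     1/18, 1/18, 0, 1/9, 1/18, 1/18;
     1/18, 1/18, 1/18, 1/18, 1/9, 0;
     1/18, 1/18, 1/18, 1/18, 0, 1/9]

theorem re_trace_pauli6_mul_pauli6 (a b : Fin 6) :
    ((pauli6 a * pauli6 b).trace).re = pauli6Gram a b := by
  simp only [pauli6, Matrix.smul_mul, Matrix.mul_smul, trace_smul,
    trace_vecMulVec_star_mul_vecMulVec_star, normSq_star_pauliEigVec_dotProduct, smul_eq_mul]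
  fin_cases a <;> fin_cases b <;> simp [pauli6Gram] <;> norm_num

theorem pauli6Gram_isSymm : pauli6Gram.IsSymm :=
  IsSymm.ext fun i j => by fin_cases i <;> fin_cases j <;> simp [pauli6Gram]

set_option maxHeartbeats 1000000 in
theorem pauli6Gram_mul_smul_tauTilde_mul :
    pauli6Gram * ((3 : ℝ) • tauTilde) * pauli6Gram = pauli6Gram := by
  ext i j
  fin_cases i <;> fin_cases j <;>
    simp [pauli6Gram, tauTilde, Matrix.mul_apply, Fin.sum_univ_succ] <;> norm_num

theorem smul_tauTilde_mul_pauli6Gram_isSymm : ((3 : ℝ) • tauTilde * pauli6Gram).IsSymm :=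
  IsSymm.ext fun i j => by
    fin_cases i <;> fin_cases j <;>
      simp [pauli6Gram, tauTilde, Matrix.mul_apply, Fin.sum_univ_succ] <;> norm_num

theorem stmt8_general (T Tp : Matrix (Fin 6) (Fin 6) ℝ)
    (hT : ∀ a b, T a b = ((pauli6 a * pauli6 b).trace).re)
    (hTp1 : T * Tp * T = T)
    (hTp4 : (Tp * T)ᵀ = Tp * T) :
    ((3 : ℝ) • tauTilde) * T = Tp * T ∧
      ((3 : ℝ) • tauTilde) * T * ((3 : ℝ) • tauTilde)ᵀ = Tp * T * Tpᵀ := by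
  obtain rfl : T = pauli6Gram :=
    Matrix.ext fun a b => (hT a b).trans (re_trace_pauli6_mul_pauli6 a b)
  have hproj : (3 : ℝ) • tauTilde * pauli6Gram = Tp * pauli6Gram :=
    mul_eq_mul_of_mul_mul_eq_of_isSymm hTp1 hTp4 pauli6Gram_mul_smul_tauTilde_mul
      smul_tauTilde_mul_pauli6Gram_isSymm
  exact ⟨hproj, mul_mul_transpose_eq_of_mul_eq pauli6Gram_isSymm hproj⟩

/-- For the Pauli-6 Gram matrix T with Moore–Penrose pseudoinverse T⁺
(characterized by the four Penrose conditions), 3τ̃·T = T⁺·T, and the estimator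
tensors (3τ̃)T(3τ̃)ᵗ and T⁺T(T⁺)ᵗ coincide. -/
theorem stmt8 (T Tp : Matrix (Fin 6) (Fin 6) ℝ)
    (hT : ∀ a b, T a b = ((pauli6 a * pauli6 b).trace).re)
    (hTp1 : T * Tp * T = T) (hTp2 : Tp * T * Tp = Tp)
    (hTp3 : (T * Tp)ᵀ = T * Tp) (hTp4 : (Tp * T)ᵀ = Tp * T) :
    ((3 : ℝ) • tauTilde) * T = Tp * T ∧
      ((3 : ℝ) • tauTilde) * T * ((3 : ℝ) • tauTilde)ᵀ = Tp * T * Tpᵀ :=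
  stmt8_general T Tp hT hTp1 hTp4
end

section
/- For any single-qubit state ρ, the classical-shadow reconstruction holds: ρ = Σ_{i∈{X,Y,Z}} Σ_{a∈{0,1}} (1/3) ⟨a|Uᵢ† ρ Uᵢ|a⟩ (3 Uᵢ|a⟩⟨a|Uᵢ† − I), where Uᵢ|a⟩ are the eigenvectors of the Pauli matrix i. -/
open Matrix Complex
open scoped ComplexOrder

/-- The Pauli matrices X, Y, Z. -/
noncomputable def pauliMat : Fin 3 → Matrix (Fin 2) (Fin 2) ℂ
  | 0 => !![0, 1; 1, 0]
  | 1 => !![0, -Complex.I; Complex.I, 0]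
  | 2 => !![1, 0; 0, -1]

lemma projApply (U : Matrix (Fin 2) (Fin 2) ℂ) (a j k : Fin 2) :
    (U * Matrix.single a a (1:ℂ) * Uᴴ) j k = U j a * star (U k a) := by
  simp [Matrix.mul_apply, Matrix.single, Fin.sum_univ_two]
  fin_cases a <;> simp

lemma outerFact (U ρ : Matrix (Fin 2) (Fin 2) ℂ) (a : Fin 2) :
    ((U * Matrix.single a a (1:ℂ) * Uᴴ * ρ).trace) • (U * Matrix.single a a (1:ℂ) * Uᴴ)
    = (U * Matrix.single a a (1:ℂ) * Uᴴ) * ρ * (U * Matrix.single a a (1:ℂ) * Uᴴ) := by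
  ext j k
  simp [Matrix.trace, Matrix.mul_apply, Matrix.single, Fin.sum_univ_two, Matrix.diag]
  fin_cases a <;> fin_cases j <;> fin_cases k <;> simp <;> ring

lemma projSum (U : Matrix (Fin 2) (Fin 2) ℂ) (hU : U ∈ Matrix.unitaryGroup (Fin 2) ℂ) :
    (U * Matrix.single 0 0 (1:ℂ) * Uᴴ) + (U * Matrix.single 1 1 (1:ℂ) * Uᴴ) = 1 := by
  have h : (Matrix.single 0 0 (1:ℂ)) + (Matrix.single 1 1 (1:ℂ))
      = (1 : Matrix (Fin 2) (Fin 2) ℂ) := by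
    ext j k; fin_cases j <;> fin_cases k <;> simp [Matrix.single, Matrix.one_apply]
  calc (U * Matrix.single 0 0 (1:ℂ) * Uᴴ) + (U * Matrix.single 1 1 (1:ℂ) * Uᴴ)
      = U * ((Matrix.single 0 0 (1:ℂ)) + (Matrix.single 1 1 (1:ℂ))) * Uᴴ := by
        noncomm_ring
    _ = 1 := by
        rw [h, mul_one, ← Matrix.star_eq_conjTranspose]
        exact Matrix.mem_unitaryGroup_iff.mp hU

lemma projTrace (U : Matrix (Fin 2) (Fin 2) ℂ) (hU : U ∈ Matrix.unitaryGroup (Fin 2) ℂ)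
    (a : Fin 2) : (U * Matrix.single a a (1:ℂ) * Uᴴ).trace = 1 := by
  have h : (Uᴴ * U) a a = 1 := by
    rw [← Matrix.star_eq_conjTranspose, Matrix.mem_unitaryGroup_iff'.mp hU, Matrix.one_apply_eq]
  have h2 : (Uᴴ * U) a a = ∑ j : Fin 2, star (U j a) * U j a := by
    rw [Matrix.mul_apply]
    exact Finset.sum_congr rfl (fun j _ => by rw [Matrix.conjTranspose_apply])
  have h3 : (U * Matrix.single a a (1:ℂ) * Uᴴ).trace = ∑ j : Fin 2, U j a * star (U j a) := by
    rw [Matrix.trace]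
    exact Finset.sum_congr rfl (fun j _ => by rw [Matrix.diag_apply, projApply])
  rw [h3, ← h, h2]
  exact Finset.sum_congr rfl (fun j _ => by ring)

lemma sigmaProj (σ U : Matrix (Fin 2) (Fin 2) ℂ) (a : Fin 2) (c : ℂ)
    (h : σ.mulVec (fun j => U j a) = c • (fun j => U j a)) :
    σ * (U * Matrix.single a a (1:ℂ) * Uᴴ) = c • (U * Matrix.single a a (1:ℂ) * Uᴴ) := by
  have hc : ∀ j, σ j 0 * U 0 a + σ j 1 * U 1 a = c * U j a := by
    intro j
    have := congr_fun h j
    simpa [Matrix.mulVec, dotProduct, Fin.sum_univ_two] using this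
  ext j k
  rw [Matrix.mul_apply, Matrix.smul_apply, Fin.sum_univ_two, projApply, projApply, projApply,
    smul_eq_mul]
  linear_combination (star (U k a)) * hc j

/-- The key per-basis identity. -/
lemma innerKey (σ U ρ : Matrix (Fin 2) (Fin 2) ℂ) (hU : U ∈ Matrix.unitaryGroup (Fin 2) ℂ)
    (hσ2 : σ * σ = 1) (hσI : ∀ c : ℝ, σ ≠ (c:ℂ) • 1)
    (hEig : ∀ a : Fin 2, ∃ c : ℝ, σ.mulVec (fun j => U j a) = (c:ℂ) • (fun j => U j a)) :
    ∑ a : Fin 2, ((U * Matrix.single a a (1:ℂ) * Uᴴ * ρ).trace) •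
      (U * Matrix.single a a (1:ℂ) * Uᴴ) = (2:ℂ)⁻¹ • (ρ + σ * ρ * σ) := by
  set P : Fin 2 → Matrix (Fin 2) (Fin 2) ℂ := fun a => U * Matrix.single a a (1:ℂ) * Uᴴ with hP
  obtain ⟨c0, hc0⟩ := hEig 0
  obtain ⟨c1, hc1⟩ := hEig 1
  have hs0 : σ * P 0 = (c0:ℂ) • P 0 := sigmaProj σ U 0 _ hc0
  have hs1 : σ * P 1 = (c1:ℂ) • P 1 := sigmaProj σ U 1 _ hc1
  have hsum : P 0 + P 1 = 1 := projSum U hU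
  have htr : ∀ a, (P a).trace = 1 := projTrace U hU
  have hsq : ∀ (c : ℝ) (a : Fin 2), σ * P a = (c:ℂ) • P a → (c:ℂ)^2 = 1 := by
    intro c a hs
    have h1 : σ * (σ * P a) = P a := by rw [← mul_assoc, hσ2, one_mul]
    rw [hs, Matrix.mul_smul, hs, smul_smul] at h1
    have := congr_arg Matrix.trace h1
    rw [Matrix.trace_smul, htr a, smul_eq_mul, mul_one] at this
    rw [sq]; exact this
  have hc0sq := hsq c0 0 hs0
  have hc1sq := hsq c1 1 hs1
  have hσdec : σ = (c0:ℂ) • P 0 + (c1:ℂ) • P 1 := by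
    have : σ * (P 0 + P 1) = σ := by rw [hsum, mul_one]
    rw [mul_add, hs0, hs1] at this
    exact this.symm
  have hne : (c0:ℂ) ≠ (c1:ℂ) := by
    intro h
    apply hσI c0
    rw [hσdec, ← h, ← smul_add, hsum]
  have hneg : (c1:ℂ) = -(c0:ℂ) := by
    have h : ((c0:ℂ) - c1) * ((c0:ℂ) + c1) = 0 := by
      linear_combination hc0sq - hc1sq
    rcases mul_eq_zero.mp h with h' | h'
    · exact absurd (by linear_combination h') hne
    · linear_combination h'
  have hdiff : σ = (c0:ℂ) • (P 0 - P 1) := by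
    rw [hσdec, hneg, smul_sub, neg_smul, sub_eq_add_neg]
  have hσρσ : σ * ρ * σ = (P 0 - P 1) * ρ * (P 0 - P 1) := by
    rw [hdiff, Matrix.smul_mul, Matrix.mul_smul, Matrix.smul_mul, smul_smul, ← sq, hc0sq, one_smul]
  have houter0 := outerFact U ρ 0
  have houter1 := outerFact U ρ 1
  have hpar : P 0 * ρ * P 0 + P 1 * ρ * P 1
      = (2:ℂ)⁻¹ • ((P 0 + P 1) * ρ * (P 0 + P 1) + (P 0 - P 1) * ρ * (P 0 - P 1)) := by
    have h2 : (P 0 + P 1) * ρ * (P 0 + P 1) + (P 0 - P 1) * ρ * (P 0 - P 1)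
        = (2:ℂ) • (P 0 * ρ * P 0 + P 1 * ρ * P 1) := by
      rw [two_smul]; noncomm_ring
    rw [h2, smul_smul]; norm_num
  rw [Fin.sum_univ_two]
  show ((P 0 * ρ).trace) • P 0 + ((P 1 * ρ).trace) • P 1 = _
  rw [show (P 0 * ρ).trace • P 0 = P 0 * ρ * P 0 from houter0,
      show (P 1 * ρ).trace • P 1 = P 1 * ρ * P 1 from houter1, hpar, hsum, hσρσ.symm, one_mul, mul_one]

lemma pauliSq : ∀ i : Fin 3, pauliMat i * pauliMat i = 1 := by
  intro i
  fin_cases i <;>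
    · ext j k
      fin_cases j <;> fin_cases k <;>
        simp [pauliMat, Matrix.mul_apply, Fin.sum_univ_two, Matrix.one_apply, Complex.I_mul_I] <;>
        ring_nf <;> simp [Complex.I_sq]

lemma pauliNotScalar : ∀ (i : Fin 3) (c : ℝ), pauliMat i ≠ (c:ℂ) • 1 := by
  intro i c h
  fin_cases i
  · have := congr_fun (congr_fun h 0) 1
    simp [pauliMat, Matrix.one_apply] at this
  · have := congr_fun (congr_fun h 0) 1
    simp [pauliMat, Matrix.one_apply] at this
  · have h0 := congr_fun (congr_fun h 0) 0
    have h1 := congr_fun (congr_fun h 1) 1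
    simp [pauliMat, Matrix.one_apply] at h0 h1
    rw [← h0] at h1
    norm_num at h1

lemma pauliTwirl (ρ : Matrix (Fin 2) (Fin 2) ℂ) :
    ∑ i : Fin 3, pauliMat i * ρ * pauliMat i = (2 * ρ.trace) • 1 - ρ := by
  rw [Fin.sum_univ_three]
  ext j k
  fin_cases j <;> fin_cases k <;>
    simp [pauliMat, Matrix.mul_apply, Matrix.trace, Matrix.diag, Fin.sum_univ_two,
      Matrix.vecMul, dotProduct, Matrix.one_apply] <;>
    ring_nf <;> simp [Complex.I_sq] <;> ring

/-- the single-qubit classical-shadow reconstruction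
ρ = Σ_{i,a} (1/3)⟨a|Uᵢ†ρUᵢ|a⟩ (3 Uᵢ|a⟩⟨a|Uᵢ† − I), where Uᵢ maps the computational
basis to the eigenbasis of the i-th Pauli matrix. -/
theorem stmt9 (U : Fin 3 → Matrix (Fin 2) (Fin 2) ℂ)
    (hU : ∀ i, U i ∈ Matrix.unitaryGroup (Fin 2) ℂ)
    (hEig : ∀ i (a : Fin 2), ∃ c : ℝ,
      (pauliMat i).mulVec (fun j => U i j a) = (c : ℂ) • (fun j => U i j a))
    (ρ : Matrix (Fin 2) (Fin 2) ℂ) (hρ : ρ.PosSemidef) (hρ1 : ρ.trace = 1) :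
    ρ = ∑ i : Fin 3, ∑ a : Fin 2,
      ((3 : ℂ)⁻¹ * ((U i * Matrix.single a a 1 * (U i)ᴴ * ρ).trace)) •
        ((3 : ℂ) • (U i * Matrix.single a a 1 * (U i)ᴴ) - 1) := by
  have hk : ∀ i : Fin 3, ∑ a : Fin 2,
      ((U i * Matrix.single a a (1:ℂ) * (U i)ᴴ * ρ).trace) •
        (U i * Matrix.single a a (1:ℂ) * (U i)ᴴ)
      = (2:ℂ)⁻¹ • (ρ + pauliMat i * ρ * pauliMat i) :=
    fun i => innerKey (pauliMat i) (U i) ρ (hU i) (pauliSq i) (pauliNotScalar i) (hEig i)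
  have htr : ∀ i : Fin 3,
      ∑ a : Fin 2, ((U i * Matrix.single a a (1:ℂ) * (U i)ᴴ * ρ).trace) = ρ.trace := by
    intro i
    rw [Fin.sum_univ_two, ← Matrix.trace_add, ← Matrix.add_mul, projSum (U i) (hU i), one_mul]
  have hinner : ∀ i : Fin 3, ∑ a : Fin 2,
      ((3 : ℂ)⁻¹ * ((U i * Matrix.single a a 1 * (U i)ᴴ * ρ).trace)) •
        ((3 : ℂ) • (U i * Matrix.single a a 1 * (U i)ᴴ) - 1)
      = (2:ℂ)⁻¹ • (ρ + pauliMat i * ρ * pauliMat i) - ((3:ℂ)⁻¹ * ρ.trace) • 1 := by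
    intro i
    have hsummand : ∀ a : Fin 2,
        ((3 : ℂ)⁻¹ * ((U i * Matrix.single a a 1 * (U i)ᴴ * ρ).trace)) •
          ((3 : ℂ) • (U i * Matrix.single a a 1 * (U i)ᴴ) - 1)
        = ((U i * Matrix.single a a (1:ℂ) * (U i)ᴴ * ρ).trace) •
            (U i * Matrix.single a a (1:ℂ) * (U i)ᴴ)
          - ((3 : ℂ)⁻¹ * ((U i * Matrix.single a a (1:ℂ) * (U i)ᴴ * ρ).trace)) • 1 := by
      intro a
      rw [smul_sub, smul_smul]
      congr 2
      ring
    rw [Finset.sum_congr rfl (fun a _ => hsummand a), Finset.sum_sub_distrib, hk i]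
    congr 1
    rw [← Finset.sum_smul, ← Finset.mul_sum, htr i]
  rw [Finset.sum_congr rfl (fun i _ => hinner i), Finset.sum_sub_distrib,
    ← Finset.smul_sum, Finset.sum_add_distrib, pauliTwirl, Finset.sum_const, Finset.sum_const,
    Finset.card_univ, hρ1]
  simp only [Fintype.card_fin]
  match_scalars <;> ring
end

section
/- For the single-qubit overlap estimator with the Pauli-6 POVM and the pseudoinverse choice, the matrix τ̂ = T⁺ T (T⁺)ᵗ has entries bounded in absolute value, and for independent samples a ∼ P_ρ, b ∼ P_σ one has E[τ̂_{ab}] = Tr(ρσ) for any two single-qubit states ρ, σ. -/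
open Matrix Complex
open scoped ComplexOrder

noncomputable def T0 : Matrix (Fin 6) (Fin 6) ℝ :=
  Matrix.of fun a b => if a = b then 1/9 else if (a:ℕ)/2 = (b:ℕ)/2 then 0 else 1/18

noncomputable def Tp0 : Matrix (Fin 6) (Fin 6) ℝ :=
  Matrix.of fun a b => if a = b then 5 else if (a:ℕ)/2 = (b:ℕ)/2 then -4 else 1/2

noncomputable def G0 : Matrix (Fin 6) (Fin 6) ℝ :=
  Matrix.of fun a b => if a = b then 2/3 else if (a:ℕ)/2 = (b:ℕ)/2 then -1/3 else 1/6

lemma h4sqrt : Real.sqrt 2 ^ 4 = 4 := by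
  have h2 : (Real.sqrt 2) * Real.sqrt 2 = 2 := Real.mul_self_sqrt (by norm_num)
  nlinarith [h2]

lemma v0 : ((0:Fin 6):ℕ) = 0 := rfl
lemma v1 : ((1:Fin 6):ℕ) = 1 := rfl
lemma v2 : ((2:Fin 6):ℕ) = 2 := rfl
lemma v3 : ((3:Fin 6):ℕ) = 3 := rfl
lemma v4 : ((4:Fin 6):ℕ) = 4 := rfl
lemma v5 : ((5:Fin 6):ℕ) = 5 := rfl

set_option maxHeartbeats 1000000 in
lemma Teq : ∀ a b, ((pauli6 a * pauli6 b).trace).re = T0 a b := by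
  have h2 : (Real.sqrt 2) * Real.sqrt 2 = 2 := Real.mul_self_sqrt (by norm_num)
  intro a b
  fin_cases a <;> fin_cases b <;>
    simp [pauli6, pauliEigVec, Matrix.trace, Matrix.mul_apply, Matrix.vecMulVec_apply, -Matrix.cons_vecMulVec, -Matrix.vecMulVec_cons, T0,
      Fin.sum_univ_two, Fin.isValue, Fin.ext_iff, v0, v1, v2, v3, v4, v5] <;>
    (try norm_num [Complex.ext_iff]) <;> (try ring_nf) <;>
    (try norm_num [h4sqrt, v3, v4, v5])

set_option maxHeartbeats 1000000 in
lemma symT0 : T0ᵀ = T0 := by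
  ext a b; fin_cases a <;> fin_cases b <;> rfl

set_option maxHeartbeats 1000000 in
lemma symTp0 : Tp0ᵀ = Tp0 := by
  ext a b; fin_cases a <;> fin_cases b <;> rfl

set_option maxHeartbeats 1000000 in
lemma symG0 : G0ᵀ = G0 := by
  ext a b; fin_cases a <;> fin_cases b <;> rfl

set_option maxHeartbeats 1000000 in
lemma m1 : T0 * Tp0 = G0 := by
  ext a b
  fin_cases a <;> fin_cases b <;>
    norm_num +decide [Matrix.mul_apply, Fin.sum_univ_six, T0, Tp0, G0]

set_option maxHeartbeats 1000000 in
lemma m2 : G0 * T0 = T0 := by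
  ext a b
  fin_cases a <;> fin_cases b <;>
    norm_num +decide [Matrix.mul_apply, Fin.sum_univ_six, T0, Tp0, G0]

set_option maxHeartbeats 1000000 in
lemma m3 : G0 * Tp0 = Tp0 := by
  ext a b
  fin_cases a <;> fin_cases b <;>
    norm_num +decide [Matrix.mul_apply, Fin.sum_univ_six, T0, Tp0, G0]

lemma m4 : Tp0 * T0 = G0 := by
  have : Tp0 * T0 = (T0ᵀ * Tp0ᵀ)ᵀ := by rw [← Matrix.transpose_mul, Matrix.transpose_transpose]
  rw [this, symT0, symTp0, m1, symG0]

lemma mp_unique {n : Type*} [Fintype n] [DecidableEq n]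
    (A B C : Matrix n n ℝ)
    (hB1 : A*B*A = A) (hB2 : B*A*B = B) (hB3 : (A*B)ᵀ = A*B) (hB4 : (B*A)ᵀ = B*A)
    (hC1 : A*C*A = A) (hC2 : C*A*C = C) (hC3 : (A*C)ᵀ = A*C) (hC4 : (C*A)ᵀ = C*A) :
    B = C := by
  have hAB : A * B = A * C := by
    calc A * B = (A*B)ᵀ := hB3.symm
    _ = Bᵀ * Aᵀ := Matrix.transpose_mul A B
    _ = Bᵀ * (A*C*A)ᵀ := by rw [hC1]
    _ = Bᵀ * (Aᵀ * (A*C)ᵀ) := by rw [Matrix.transpose_mul (A*C) A]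
    _ = (Bᵀ * Aᵀ) * (A*C) := by rw [hC3, Matrix.mul_assoc]
    _ = (A*B)ᵀ * (A*C) := by rw [Matrix.transpose_mul A B]
    _ = (A*B) * (A*C) := by rw [hB3]
    _ = (A*B*A) * C := by rw [Matrix.mul_assoc (A*B) A C]
    _ = A * C := by rw [hB1]
  have hBA : B * A = C * A := by
    have h5 : (A*C*A)ᵀ = (C*A) * Aᵀ := by
      rw [Matrix.mul_assoc, Matrix.transpose_mul A (C*A), hC4]
    calc B * A = (B*A)ᵀ := hB4.symm
    _ = Aᵀ * Bᵀ := Matrix.transpose_mul B A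
    _ = (A*C*A)ᵀ * Bᵀ := by rw [hC1]
    _ = ((C*A) * Aᵀ) * Bᵀ := by rw [h5]
    _ = (C*A) * (Aᵀ * Bᵀ) := by rw [Matrix.mul_assoc]
    _ = (C*A) * (B*A)ᵀ := by rw [Matrix.transpose_mul B A]
    _ = (C*A) * (B*A) := by rw [hB4]
    _ = C * (A*B*A) := by rw [Matrix.mul_assoc C A (B*A), Matrix.mul_assoc A B A]
    _ = C * A := by rw [hB1]
  calc B = B * A * B := hB2.symm
  _ = (C * A) * B := by rw [hBA]
  _ = C * (A * B) := by rw [Matrix.mul_assoc]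
  _ = C * (A * C) := by rw [hAB]
  _ = C * A * C := by rw [Matrix.mul_assoc]
  _ = C := hC2

lemma c2 : (((Real.sqrt 2 : ℝ) : ℂ))⁻¹ * (((Real.sqrt 2 : ℝ) : ℂ))⁻¹ = 2⁻¹ := by
  rw [← mul_inv, ← Complex.ofReal_mul, Real.mul_self_sqrt (by norm_num : (0:ℝ) ≤ 2)]
  norm_num

lemma f0 (ρ : Matrix (Fin 2) (Fin 2) ℂ) : ((ρ * pauli6 0).trace).re = (ρ 0 0).re / 3 := by
  simp [pauli6, pauliEigVec, Matrix.trace, Matrix.mul_apply, Matrix.vecMulVec_apply, -Matrix.cons_vecMulVec, -Matrix.vecMulVec_cons,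
    Fin.sum_univ_two, Complex.div_re]
  ring

lemma f1 (ρ : Matrix (Fin 2) (Fin 2) ℂ) : ((ρ * pauli6 1).trace).re = (ρ 1 1).re / 3 := by
  simp [pauli6, pauliEigVec, Matrix.trace, Matrix.mul_apply, Matrix.vecMulVec_apply, -Matrix.cons_vecMulVec, -Matrix.vecMulVec_cons,
    Fin.sum_univ_two, Complex.div_re]
  ring

lemma f2 (ρ : Matrix (Fin 2) (Fin 2) ℂ) : ((ρ * pauli6 2).trace).re =
    ((ρ 0 0).re + (ρ 0 1).re + (ρ 1 0).re + (ρ 1 1).re) / 6 := by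
  simp [pauli6, pauliEigVec, Matrix.trace, Matrix.mul_apply, Matrix.vecMulVec_apply, -Matrix.cons_vecMulVec, -Matrix.vecMulVec_cons,
    Fin.sum_univ_two, Complex.mul_re, Complex.mul_im, c2]
  have hre := congrArg Complex.re c2
  have him := congrArg Complex.im c2
  simp [Complex.mul_re, Complex.mul_im] at hre him
  ring_nf
  try simp [Complex.mul_re, Complex.mul_im]
  try nlinarith [hre, him]


lemma f3 (ρ : Matrix (Fin 2) (Fin 2) ℂ) : ((ρ * pauli6 3).trace).re =
    ((ρ 0 0).re - (ρ 0 1).re - (ρ 1 0).re + (ρ 1 1).re) / 6 := by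
  simp [pauli6, pauliEigVec, Matrix.trace, Matrix.mul_apply, Matrix.vecMulVec_apply, -Matrix.cons_vecMulVec, -Matrix.vecMulVec_cons,
    Fin.sum_univ_two, Complex.mul_re, Complex.mul_im, c2]
  have hre := congrArg Complex.re c2
  have him := congrArg Complex.im c2
  simp [Complex.mul_re, Complex.mul_im] at hre him
  ring_nf
  try simp [Complex.mul_re, Complex.mul_im]
  try nlinarith [hre, him]


lemma f4 (ρ : Matrix (Fin 2) (Fin 2) ℂ) : ((ρ * pauli6 4).trace).re =
    ((ρ 0 0).re - (ρ 0 1).im + (ρ 1 0).im + (ρ 1 1).re) / 6 := by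
  simp [pauli6, pauliEigVec, Matrix.trace, Matrix.mul_apply, Matrix.vecMulVec_apply, -Matrix.cons_vecMulVec, -Matrix.vecMulVec_cons,
    Fin.sum_univ_two, Complex.mul_re, Complex.mul_im, c2]
  have hre := congrArg Complex.re c2
  have him := congrArg Complex.im c2
  simp [Complex.mul_re, Complex.mul_im] at hre him
  ring_nf
  try simp [Complex.mul_re, Complex.mul_im]
  try nlinarith [hre, him]


lemma f5 (ρ : Matrix (Fin 2) (Fin 2) ℂ) : ((ρ * pauli6 5).trace).re =
    ((ρ 0 0).re + (ρ 0 1).im - (ρ 1 0).im + (ρ 1 1).re) / 6 := by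
  simp [pauli6, pauliEigVec, Matrix.trace, Matrix.mul_apply, Matrix.vecMulVec_apply, -Matrix.cons_vecMulVec, -Matrix.vecMulVec_cons,
    Fin.sum_univ_two, Complex.mul_re, Complex.mul_im, c2]
  have hre := congrArg Complex.re c2
  have him := congrArg Complex.im c2
  simp [Complex.mul_re, Complex.mul_im] at hre him
  ring_nf
  try simp [Complex.mul_re, Complex.mul_im]
  try nlinarith [hre, him]


set_option maxHeartbeats 2000000 in
/-- For the Pauli-6 POVM with Gram matrix T and its Moore–Penrose
pseudoinverse T⁺, the estimator matrix τ̂ = T⁺T(T⁺)ᵗ has entries bounded in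
absolute value, and for independent samples a ∼ P_ρ, b ∼ P_σ the expectation of
τ̂_{ab} equals Tr(ρσ) for any two single-qubit states ρ, σ. -/
theorem stmt16 (T Tp : Matrix (Fin 6) (Fin 6) ℝ)
    (hT : ∀ a b, T a b = ((pauli6 a * pauli6 b).trace).re)
    (hTp1 : T * Tp * T = T) (hTp2 : Tp * T * Tp = Tp)
    (hTp3 : (T * Tp)ᵀ = T * Tp) (hTp4 : (Tp * T)ᵀ = Tp * T) :
    (∃ C : ℝ, ∀ a b, |(Tp * T * Tpᵀ) a b| ≤ C) ∧
      ∀ ρ σ : Matrix (Fin 2) (Fin 2) ℂ,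
        ρ.PosSemidef → σ.PosSemidef → ρ.trace = 1 → σ.trace = 1 →
        ∑ a, ∑ b, ((ρ * pauli6 a).trace).re * (Tp * T * Tpᵀ) a b *
            ((σ * pauli6 b).trace).re = ((ρ * σ).trace).re := by
  have hTT : T = T0 := by funext a b; rw [hT a b]; exact Teq a b
  subst hTT
  have hp1 : T0 * Tp0 * T0 = T0 := by rw [m1, m2]
  have hp2 : Tp0 * T0 * Tp0 = Tp0 := by rw [m4, m3]
  have hp3 : (T0 * Tp0)ᵀ = T0 * Tp0 := by rw [m1, symG0]
  have hp4 : (Tp0 * T0)ᵀ = Tp0 * T0 := by rw [m4, symG0]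
  have hTpEq : Tp = Tp0 := mp_unique T0 Tp Tp0 hTp1 hTp2 hTp3 hTp4 hp1 hp2 hp3 hp4
  subst hTpEq
  have key : Tp0 * T0 * Tp0ᵀ = Tp0 := by rw [symTp0, hp2]
  rw [key]
  constructor
  · refine ⟨5, fun a b => ?_⟩
    simp only [Tp0, Matrix.of_apply]
    split_ifs <;> norm_num [abs_le]
  · intro ρ σ hρ hσ tρ tσ
    have hρH := hρ.1
    have hσH := hσ.1
    have rρ01 : (ρ 0 1).re = (ρ 1 0).re := by
      rw [← hρH.apply 0 1]; simp
    have iρ01 : (ρ 0 1).im = -(ρ 1 0).im := by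
      rw [← hρH.apply 0 1]; simp
    have iρ00 : (ρ 0 0).im = 0 := by
      have := congrArg Complex.im (hρH.apply 0 0)
      simp at this; linarith
    have iρ11 : (ρ 1 1).im = 0 := by
      have := congrArg Complex.im (hρH.apply 1 1)
      simp at this; linarith
    have trρ : (ρ 1 1).re = 1 - (ρ 0 0).re := by
      have : (ρ 0 0 + ρ 1 1) = 1 := by
        rw [← tρ]; simp [Matrix.trace, Fin.sum_univ_two]
      have := congrArg Complex.re this
      simp at this; linarith
    have rσ01 : (σ 0 1).re = (σ 1 0).re := by
      rw [← hσH.apply 0 1]; simp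
    have iσ01 : (σ 0 1).im = -(σ 1 0).im := by
      rw [← hσH.apply 0 1]; simp
    have iσ00 : (σ 0 0).im = 0 := by
      have := congrArg Complex.im (hσH.apply 0 0)
      simp at this; linarith
    have iσ11 : (σ 1 1).im = 0 := by
      have := congrArg Complex.im (hσH.apply 1 1)
      simp at this; linarith
    have trσ : (σ 1 1).re = 1 - (σ 0 0).re := by
      have h : (σ 0 0 + σ 1 1) = 1 := by
        rw [← tσ]; simp [Matrix.trace, Fin.sum_univ_two]
      have := congrArg Complex.re h
      simp at this; linarith
    simp only [Fin.sum_univ_six, f0, f1, f2, f3, f4, f5]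
    norm_num [Tp0, Fin.ext_iff, v0, v1, v2, v3, v4, v5, Matrix.diag,
      Matrix.trace, Matrix.mul_apply, Fin.sum_univ_two, Complex.add_re, Complex.mul_re]
    simp only [rρ01, iρ01, iρ00, iρ11, trρ, rσ01, iσ01, iσ00, iσ11, trσ]
    ring
end

section
/- For n-qubit states ρ and σ represented via a product IC-POVM M^{(n)} = M^{⊗n}, the overlap factorizes through the product distribution: Tr(ρσ) = E_{a∼P_ρ, b∼P_σ}[Π_{k=1}^n [τ₁Tτ₂ᵗ]_{a_k b_k}] whenever τ₁, τ₂ are generalized inverses of the single-qubit Gram matrix T, where a = (a₁,…,aₙ), b = (b₁,…,bₙ), P_ρ(a) = Tr(ρ M_{a₁}⊗…⊗M_{aₙ}). -/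
open Matrix
open scoped ComplexOrder

private lemma aux_trace_real {m : Type*} [Fintype m] [DecidableEq m] {A B : Matrix m m ℂ}
    (hA : A.IsHermitian) (hB : B.IsHermitian) :
    (((A * B).trace).re : ℂ) = (A * B).trace := by
  rw [← Complex.conj_eq_iff_re]
  calc (starRingEnd ℂ) ((A * B).trace) = ((A * B)ᴴ).trace := by
        rw [Matrix.trace_conjTranspose]; rfl
    _ = (A * B).trace := by
        rw [Matrix.conjTranspose_mul, hA.eq, hB.eq, Matrix.trace_mul_comm]

private lemma aux_sum_prod {κ α β R : Type*} [Fintype κ] [DecidableEq κ] [Fintype α] [Fintype β]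
    [CommSemiring R] (f : κ → α → β → R) :
    ∑ x : κ → α, ∑ y : κ → β, ∏ k, f k (x k) (y k) = ∏ k, ∑ i, ∑ j, f k i j := by
  calc ∑ x : κ → α, ∑ y : κ → β, ∏ k, f k (x k) (y k)
      = ∑ x : κ → α, ∏ k, ∑ j, f k (x k) j :=
        Finset.sum_congr rfl fun x _ => (Fintype.prod_sum fun k j => f k (x k) j).symm
    _ = ∏ k, ∑ i, ∑ j, f k i j := (Fintype.prod_sum fun k i => ∑ j, f k i j).symm

private lemma aux_bilinear {γ : Type*} [Fintype γ] [DecidableEq γ] (Tn Kn : Matrix γ γ ℂ)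
    (hs : Tnᵀ = Tn) (hk : Tn * Kn * Tn = Tn) (c d : γ → ℂ) :
    ∑ a, ∑ b, (∑ a', c a' * Tn a' a) * Kn a b * (∑ b', d b' * Tn b' b)
      = ∑ a', ∑ b', c a' * d b' * Tn a' b' := by
  have hu : ∀ a, (∑ a', c a' * Tn a' a) = (c ᵥ* Tn) a := fun a => by
    simp [Matrix.vecMul, dotProduct]
  have hv : ∀ b, (∑ b', d b' * Tn b' b) = (d ᵥ* Tn) b := fun b => by
    simp [Matrix.vecMul, dotProduct]
  calc ∑ a, ∑ b, (∑ a', c a' * Tn a' a) * Kn a b * (∑ b', d b' * Tn b' b)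
      = (c ᵥ* Tn) ⬝ᵥ (Kn *ᵥ (d ᵥ* Tn)) := by
        simp_rw [hu, hv]
        simp [dotProduct, Matrix.mulVec, Finset.mul_sum, mul_assoc]
    _ = ((c ᵥ* Tn) ᵥ* Kn) ⬝ᵥ (d ᵥ* Tn) := Matrix.dotProduct_mulVec _ _ _
    _ = (c ᵥ* (Tn * Kn)) ⬝ᵥ (Tnᵀ *ᵥ d) := by
        rw [Matrix.vecMul_vecMul, Matrix.mulVec_transpose]
    _ = (c ᵥ* (Tn * Kn)) ⬝ᵥ (Tn *ᵥ d) := by rw [hs]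
    _ = ((c ᵥ* (Tn * Kn)) ᵥ* Tn) ⬝ᵥ d := Matrix.dotProduct_mulVec _ _ _
    _ = (c ᵥ* Tn) ⬝ᵥ d := by rw [Matrix.vecMul_vecMul, hk]
    _ = ∑ b', ∑ a', (c a' * Tn a' b') * d b' := by
        simp [dotProduct, Matrix.vecMul, Finset.sum_mul]
    _ = ∑ a', ∑ b', c a' * d b' * Tn a' b' := by
        rw [Finset.sum_comm]
        exact Finset.sum_congr rfl fun a _ => Finset.sum_congr rfl fun b _ => by ring

set_option maxHeartbeats 1600000 in
/-- For n-qubit Hermitian operators ρ, σ represented via a product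
IC-POVM M^{(n)} = M^{⊗n} built from a single-qubit IC-POVM with Gram matrix T and
generalized inverses τ₁, τ₂, the overlap factorizes:
Tr(ρσ) = Σ_{a,b} P_ρ(a) (Π_k [τ₁Tτ₂ᵗ]_{a_k b_k}) P_σ(b). -/
theorem stmt17 {n : ℕ} {ι : Type*} [Fintype ι] [DecidableEq ι]
    (M : ι → Matrix (Fin 2) (Fin 2) ℂ)
    (hpos : ∀ a, (M a).PosSemidef)
    (hsum : ∑ a, M a = 1)
    (hspan : ∀ A : Matrix (Fin 2) (Fin 2) ℂ, A.IsHermitian →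
      A ∈ Submodule.span ℝ (Set.range M))
    (T : Matrix ι ι ℝ)
    (hT : ∀ a b, T a b = ((M a * M b).trace).re)
    (τ₁ τ₂ : Matrix ι ι ℝ)
    (hτ₁ : T * τ₁ * T = T) (hτ₂ : T * τ₂ * T = T)
    (Mn : (Fin n → ι) → Matrix (Fin n → Fin 2) (Fin n → Fin 2) ℂ)
    (hMn : ∀ a x y, Mn a x y = ∏ k, M (a k) (x k) (y k))
    (ρ σ : Matrix (Fin n → Fin 2) (Fin n → Fin 2) ℂ)
    (hρ : ρ.IsHermitian) (hσ : σ.IsHermitian) :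
    ((ρ * σ).trace).re =
      ∑ a : Fin n → ι, ∑ b : Fin n → ι,
        ((ρ * Mn a).trace).re * (∏ k, (τ₁ * T * τ₂ᵀ) (a k) (b k)) *
          ((σ * Mn b).trace).re := by
  classical
  have hM : ∀ a, (M a).IsHermitian := fun a => (hpos a).1
  -- single-qubit matrices are spanned over ℂ by the POVM
  have hle : ∀ B : Matrix (Fin 2) (Fin 2) ℂ, B.IsHermitian →
      B ∈ Submodule.span ℂ (Set.range M) := by
    intro B hB
    have h : Submodule.span ℝ (Set.range M) ≤
        (Submodule.span ℂ (Set.range M)).restrictScalars ℝ :=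
      Submodule.span_le.mpr Submodule.subset_span
    exact h (hspan B hB)
  have hspanC : ∀ A : Matrix (Fin 2) (Fin 2) ℂ, A ∈ Submodule.span ℂ (Set.range M) := by
    intro A
    have e1 : ((1/2 : ℂ) • (A + Aᴴ)).IsHermitian := Matrix.IsHermitian.ext fun i j => by
      simp only [Matrix.smul_apply, Matrix.add_apply, Matrix.conjTranspose_apply,
        smul_eq_mul, star_mul', star_add, star_star]
      rw [show star (1/2 : ℂ) = 1/2 by norm_num [Complex.ext_iff]]
      ring
    have e2 : ((Complex.I/2) • (Aᴴ - A)).IsHermitian := Matrix.IsHermitian.ext fun i j => by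
      simp only [Matrix.smul_apply, Matrix.sub_apply, Matrix.conjTranspose_apply,
        smul_eq_mul, star_mul', star_sub, star_star]
      rw [show star (Complex.I/2 : ℂ) = -(Complex.I/2) by
        norm_num [Complex.ext_iff]]
      ring
    have hdec : A = (1/2 : ℂ) • (A + Aᴴ) + Complex.I • ((Complex.I/2) • (Aᴴ - A)) := by
      ext i j
      simp only [Matrix.add_apply, Matrix.smul_apply, Matrix.sub_apply,
        Matrix.conjTranspose_apply, smul_eq_mul]
      have : Complex.I * (Complex.I / 2) = -(1/2) := by
        rw [show Complex.I * (Complex.I/2) = Complex.I * Complex.I / 2 by ring,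
          Complex.I_mul_I]; ring
      rw [← mul_assoc, this]; ring
    rw [hdec]
    exact Submodule.add_mem _ (hle _ e1) (Submodule.smul_mem _ _ (hle _ e2))
  -- the product POVM is Hermitian
  have hMnH : ∀ a, (Mn a).IsHermitian := fun a => Matrix.IsHermitian.ext fun x y => by
    rw [hMn, hMn, star_prod]
    exact Finset.prod_congr rfl fun k _ => (hM (a k)).apply _ _
  -- single-qubit trace reality
  have h1tr : ∀ a b, (M a * M b).trace = ((T a b : ℝ) : ℂ) := fun a b => by
    rw [hT]; exact (aux_trace_real (hM a) (hM b)).symm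
  -- trace factorization
  have htr : ∀ a b, (Mn a * Mn b).trace = ∏ k, ((T (a k) (b k) : ℝ) : ℂ) := by
    intro a b
    calc (Mn a * Mn b).trace = ∑ x, ∑ y, Mn a x y * Mn b y x := by
          simp [Matrix.trace, Matrix.diag, Matrix.mul_apply]
      _ = ∑ x : Fin n → Fin 2, ∑ y : Fin n → Fin 2,
            ∏ k, (M (a k) (x k) (y k) * M (b k) (y k) (x k)) := by
          simp_rw [hMn, ← Finset.prod_mul_distrib]
      _ = ∏ k, ∑ u, ∑ v, M (a k) u v * M (b k) v u :=
          aux_sum_prod fun k u v => M (a k) u v * M (b k) v u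
      _ = ∏ k, (M (a k) * M (b k)).trace := by
          refine Finset.prod_congr rfl fun k _ => ?_
          simp [Matrix.trace, Matrix.diag, Matrix.mul_apply]
      _ = ∏ k, ((T (a k) (b k) : ℝ) : ℂ) := Finset.prod_congr rfl fun k _ => h1tr _ _
  -- symmetry of T
  have hTsym : ∀ i j, T i j = T j i := fun i j => by
    rw [hT, hT, Matrix.trace_mul_comm]
  have hTs : Tᵀ = T := by
    ext i j; rw [Matrix.transpose_apply]; exact hTsym j i
  -- the generalized-inverse identity
  have hG : T * (τ₁ * T * τ₂ᵀ) * T = T := by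
    have h2 : T * τ₂ᵀ * T = T := by
      have h := congrArg Matrix.transpose hτ₂
      rwa [Matrix.transpose_mul, Matrix.transpose_mul, hTs, ← Matrix.mul_assoc] at h
    calc T * (τ₁ * T * τ₂ᵀ) * T = (T * τ₁ * T) * (τ₂ᵀ * T) := by
          simp only [Matrix.mul_assoc]
      _ = T * (τ₂ᵀ * T) := by rw [hτ₁]
      _ = T := by rw [← Matrix.mul_assoc, h2]
  have hkey : ∀ x y : ι, ∑ i, ∑ j, T x i * (τ₁ * T * τ₂ᵀ) i j * T j y = T x y := by
    intro x y
    calc ∑ i, ∑ j, T x i * (τ₁ * T * τ₂ᵀ) i j * T j y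
        = ∑ i, T x i * ((τ₁ * T * τ₂ᵀ) * T) i y := by
          refine Finset.sum_congr rfl fun i _ => ?_
          rw [Matrix.mul_apply, Finset.mul_sum]
          exact Finset.sum_congr rfl fun j _ => by ring
      _ = (T * ((τ₁ * T * τ₂ᵀ) * T)) x y := (Matrix.mul_apply).symm
      _ = T x y := by rw [← Matrix.mul_assoc, hG]
  -- the n-qubit Gram and kernel matrices
  set Tn : Matrix (Fin n → ι) (Fin n → ι) ℂ :=
    Matrix.of fun a b => ∏ k, ((T (a k) (b k) : ℝ) : ℂ) with hTndef
  set Kn : Matrix (Fin n → ι) (Fin n → ι) ℂ :=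
    Matrix.of fun a b => ∏ k, (((τ₁ * T * τ₂ᵀ) (a k) (b k) : ℝ) : ℂ) with hKndef
  have hTnapp : ∀ a b, Tn a b = ∏ k, ((T (a k) (b k) : ℝ) : ℂ) := fun a b => rfl
  have hKnapp : ∀ a b, Kn a b = ∏ k, (((τ₁ * T * τ₂ᵀ) (a k) (b k) : ℝ) : ℂ) := fun a b => rfl
  have hTns : Tnᵀ = Tn := by
    ext a b
    rw [Matrix.transpose_apply, hTnapp, hTnapp]
    exact Finset.prod_congr rfl fun k _ => by rw [hTsym (b k) (a k)]
  have hTKT : Tn * Kn * Tn = Tn := by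
    ext a' b'
    have expand : (Tn * Kn * Tn) a' b' = ∑ a, ∑ b, Tn a' a * Kn a b * Tn b b' := by
      rw [Matrix.mul_apply]
      simp_rw [Matrix.mul_apply, Finset.sum_mul]
      rw [Finset.sum_comm]
    rw [expand]
    calc ∑ a : Fin n → ι, ∑ b : Fin n → ι, Tn a' a * Kn a b * Tn b b'
        = ∑ a : Fin n → ι, ∑ b : Fin n → ι, ∏ k,
            ((T (a' k) (a k) * (τ₁ * T * τ₂ᵀ) (a k) (b k) * T (b k) (b' k) : ℝ) : ℂ) := by
          refine Finset.sum_congr rfl fun a _ => Finset.sum_congr rfl fun b _ => ?_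
          rw [hTnapp, hKnapp, hTnapp, ← Finset.prod_mul_distrib, ← Finset.prod_mul_distrib]
          exact Finset.prod_congr rfl fun k _ => by push_cast; ring
      _ = ∏ k, ∑ i, ∑ j,
            ((T (a' k) i * (τ₁ * T * τ₂ᵀ) i j * T j (b' k) : ℝ) : ℂ) :=
          aux_sum_prod fun k i j => ((T (a' k) i * (τ₁ * T * τ₂ᵀ) i j * T j (b' k) : ℝ) : ℂ)
      _ = Tn a' b' := by
          rw [hTnapp]
          refine Finset.prod_congr rfl fun k _ => ?_
          have := hkey (a' k) (b' k)
          push_cast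
          exact_mod_cast congrArg (fun r : ℝ => (r : ℂ)) this
  -- every n-qubit matrix is in the ℂ-span of the product POVM
  have hspanMn : ∀ A : Matrix (Fin n → Fin 2) (Fin n → Fin 2) ℂ,
      A ∈ Submodule.span ℂ (Set.range Mn) := by
    intro A
    have hstd : ∀ x y : Fin n → Fin 2,
        Matrix.single x y (1 : ℂ) ∈ Submodule.span ℂ (Set.range Mn) := by
      intro x y
      have hex : ∀ k : Fin n, ∃ e : ι → ℂ,
          ∑ i, e i • M i = Matrix.single (x k) (y k) (1:ℂ) :=
        fun k => (Submodule.mem_span_range_iff_exists_fun ℂ).mp (hspanC _)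
      choose e he using hex
      have hrepr : Matrix.single x y (1:ℂ)
          = ∑ a : Fin n → ι, (∏ k, e k (a k)) • Mn a := by
        ext u v
        rw [Matrix.sum_apply]
        simp only [Matrix.smul_apply, smul_eq_mul, hMn]
        calc Matrix.single x y (1:ℂ) u v
            = (if x = u ∧ y = v then (1:ℂ) else 0) := rfl
          _ = ∏ k, (if x k = u k ∧ y k = v k then (1:ℂ) else 0) := by
              rw [Fintype.prod_boole]
              congr 1
              simp [funext_iff, forall_and]
          _ = ∏ k, (∑ i, e k i • M i) (u k) (v k) := by
              refine Finset.prod_congr rfl fun k _ => ?_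
              rw [he k]
              rfl
          _ = ∏ k, ∑ i, e k i * M i (u k) (v k) := by
              refine Finset.prod_congr rfl fun k _ => ?_
              rw [Matrix.sum_apply]
              exact Finset.sum_congr rfl fun i _ => rfl
          _ = ∑ a : Fin n → ι, ∏ k, e k (a k) * M (a k) (u k) (v k) :=
              Fintype.prod_sum _
          _ = ∑ a : Fin n → ι, (∏ k, e k (a k)) * ∏ k, M (a k) (u k) (v k) :=
              Finset.sum_congr rfl fun a _ => Finset.prod_mul_distrib
      rw [hrepr]
      exact Submodule.sum_mem _ fun a _ =>
        Submodule.smul_mem _ _ (Submodule.subset_span ⟨a, rfl⟩)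
    rw [Matrix.matrix_eq_sum_single A]
    refine Submodule.sum_mem _ fun x _ => Submodule.sum_mem _ fun y _ => ?_
    rw [show Matrix.single x y (A x y) = (A x y) • Matrix.single x y 1 by
      rw [Matrix.smul_single, smul_eq_mul, mul_one]]
    exact Submodule.smul_mem _ _ (hstd x y)
  obtain ⟨c, hc⟩ := (Submodule.mem_span_range_iff_exists_fun ℂ).mp (hspanMn ρ)
  obtain ⟨d, hd⟩ := (Submodule.mem_span_range_iff_exists_fun ℂ).mp (hspanMn σ)
  -- trace expansions
  have hexp : ∀ (X : Matrix (Fin n → Fin 2) (Fin n → Fin 2) ℂ) (w : (Fin n → ι) → ℂ),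
      (∑ a', w a' • Mn a') = X → ∀ a, (X * Mn a).trace = ∑ a', w a' * Tn a' a := by
    intro X w hX a
    rw [← hX, Matrix.sum_mul, Matrix.trace_sum]
    refine Finset.sum_congr rfl fun a' _ => ?_
    rw [smul_mul_assoc, Matrix.trace_smul, htr, smul_eq_mul, hTnapp]
  have hρσ : (ρ * σ).trace = ∑ a', ∑ b', c a' * d b' * Tn a' b' := by
    rw [← hc, ← hd, Matrix.sum_mul, Matrix.trace_sum]
    refine Finset.sum_congr rfl fun a' _ => ?_
    rw [Matrix.mul_sum, Matrix.trace_sum]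
    refine Finset.sum_congr rfl fun b' _ => ?_
    rw [smul_mul_assoc, mul_smul_comm, Matrix.trace_smul, Matrix.trace_smul, htr,
      smul_eq_mul, smul_eq_mul, hTnapp]
    ring
  -- the complex identity
  have hC : (ρ * σ).trace
      = ∑ a, ∑ b, (ρ * Mn a).trace * Kn a b * (σ * Mn b).trace := by
    rw [hρσ]
    simp_rw [hexp ρ c hc, hexp σ d hd]
    exact (aux_bilinear Tn Kn hTns hTKT c d).symm
  -- pass to real parts
  have hRρ : ∀ a, ((ρ * Mn a).trace.re : ℂ) = (ρ * Mn a).trace :=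
    fun a => aux_trace_real hρ (hMnH a)
  have hRσ : ∀ b, ((σ * Mn b).trace.re : ℂ) = (σ * Mn b).trace :=
    fun b => aux_trace_real hσ (hMnH b)
  have h0 : ((ρ * σ).trace.re : ℂ) = (ρ * σ).trace := aux_trace_real hρ hσ
  have final : (((ρ * σ).trace.re : ℝ) : ℂ)
      = ((∑ a : Fin n → ι, ∑ b : Fin n → ι,
          ((ρ * Mn a).trace).re * (∏ k, (τ₁ * T * τ₂ᵀ) (a k) (b k)) *
            ((σ * Mn b).trace).re : ℝ) : ℂ) := by
    rw [h0, hC]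
    push_cast
    refine Finset.sum_congr rfl fun a _ => Finset.sum_congr rfl fun b _ => ?_
    rw [hRρ a, hRσ b, hKnapp]
  exact_mod_cast final
end
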